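/- arXiv:2203.13512 — 3 statements merged into one kernel-verified Lean document; each statement's English description precedes it below -/
import Mathlib

section
/- The arboricity α, degeneracy β, and h-index γ of a finite simple graph satisfy α ≤ β ≤ 2α − 1 (for graphs with at least one edge). -/
/-- The degeneracy of `G`: the maximum over all (nonempty) induced subgraphs of
the minimum degree, expressed as the largest `d` such that some nonempty vertex
set induces a subgraph with all degrees at least `d`. -/
noncomputable def degeneracy {V : Type*} [Fintype V] (G : SimpleGraph V)
    [DecidableRel G.Adj] : ℕ :=
  sSup {d : ℕ | ∃ s : Finset V, s.Nonempty ∧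
    ∀ v ∈ s, d ≤ (s.filter (fun w => G.Adj v w)).card}

/-- The arboricity of `G`: the minimum number of forests into which the edges of
`G` can be partitioned. -/
noncomputable def arboricity {V : Type*} [Fintype V] (G : SimpleGraph V) : ℕ :=
  sInf {n : ℕ | ∃ F : Fin n → SimpleGraph V, (∀ i, (F i).IsAcyclic) ∧
    (∀ i, F i ≤ G) ∧ ∀ u v, G.Adj u v → ∃! i, (F i).Adj u v}

/-!
Removing a vertex of minimum degree over and over orders the vertices so that each has at most
`β` earlier neighbours. Colour every edge by the rank of its earlier endpoint among the earlier
neighbours of its later endpoint: in a monochromatic cycle the latest vertex would have two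
earlier neighbours of the same colour, so the `β` colour classes are forests and `α ≤ β`.
Conversely a forest on `n` vertices has at most `n - 1` edges, so a vertex set covered by `α`
forests spans fewer than `α n` edges and contains a vertex of degree at most `2α - 1`.
-/

open Finset Function

theorem Finset.exists_injOn_lt_card {β : Type*} (s : Finset β) :
    ∃ f : β → ℕ, Set.InjOn f s ∧ ∀ x ∈ s, f x < #s := by
  classical
  refine ⟨s.toList.idxOf, fun x hx y _ h => (List.idxOf_inj (mem_toList.mpr hx)).mp h,
    fun x hx => ?_⟩
  simpa using List.idxOf_lt_length_iff.mpr (mem_toList.mpr hx)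

namespace SimpleGraph

variable {V : Type*}

theorem IsAcyclic.card_edgeFinset_add_one_le [Fintype V] [Nonempty V] {H : SimpleGraph V}
    [Fintype H.edgeSet] (hH : H.IsAcyclic) : #H.edgeFinset + 1 ≤ Fintype.card V := by
  classical
  obtain ⟨T, hHT, hT⟩ := (⊤ : SimpleGraph V).exists_maximal_isAcyclic_of_le_isAcyclic le_top hH
  rw [← ((connected_top.maximal_le_isAcyclic_iff_isTree le_top).mp hT).card_edgeFinset]
  gcongr

section InducedDegrees

variable {H : SimpleGraph V} [DecidableRel H.Adj]

theorem degree_induce_eq_card_filter (s : Finset V) (v : s) :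
    (H.induce (s : Set V)).degree v = #{w ∈ s | H.Adj v w} := by
  rw [← card_neighborFinset_eq_degree, ← card_map (Embedding.subtype _)]
  congr 1
  ext w
  simp [and_comm]

theorem sum_card_filter_adj_eq_two_mul_card_edgeFinset_induce (s : Finset V) :
    ∑ v ∈ s, #{w ∈ s | H.Adj v w} = 2 * #(H.induce (s : Set V)).edgeFinset := by
  rw [← sum_degrees_eq_twice_card_edges, ← sum_coe_sort s]
  simp only [degree_induce_eq_card_filter]
  rfl

theorem IsAcyclic.sum_card_filter_adj_le (hH : H.IsAcyclic) (s : Finset V) :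
    ∑ v ∈ s, #{w ∈ s | H.Adj v w} ≤ 2 * (#s - 1) := by
  rcases s.eq_empty_or_nonempty with rfl | ⟨v, hv⟩
  · simp
  have : Nonempty (s : Set V) := ⟨⟨v, hv⟩⟩
  have hedges := (hH.induce (s : Set V)).card_edgeFinset_add_one_le
  simp only [coe_sort_coe, Fintype.card_coe] at hedges
  rw [sum_card_filter_adj_eq_two_mul_card_edgeFinset_induce]
  omega

end InducedDegrees

variable {α : Type*} [LinearOrder α]

theorem isAcyclic_of_forall_adj_lt_eq {H : SimpleGraph V} (r : V → α) (hr : Injective r)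
    (h : ∀ v w w', H.Adj v w → H.Adj v w' → r w < r v → r w' < r v → w = w') :
    H.IsAcyclic := by
  classical
  intro u c hc
  obtain ⟨x, hx, hmax⟩ := c.support.toFinset.exists_max_image r ⟨u, by simp⟩
  rw [List.mem_toFinset] at hx
  have hc' := hc.rotate hx
  have hnil := hc'.not_nil
  have hlt : ∀ y ∈ (c.rotate x hx).support, H.Adj x y → r y < r x := fun y hy hxy =>
    (hmax y (by simpa [Walk.mem_support_rotate_iff] using hy)).lt_of_ne (hr.ne hxy.ne.symm)
  exact hc'.snd_ne_penultimate <| h x _ _ (Walk.adj_snd hnil) (Walk.adj_penultimate hnil).symm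
    (hlt _ (Walk.getVert_mem_support _ _) (Walk.adj_snd hnil))
    (hlt _ (Walk.getVert_mem_support _ _) (Walk.adj_penultimate hnil).symm)

def IsForestPartition (G : SimpleGraph V) {ι : Type*} (F : ι → SimpleGraph V) : Prop :=
  (∀ i, (F i).IsAcyclic) ∧ (∀ i, F i ≤ G) ∧ ∀ u v, G.Adj u v → ∃! i, (F i).Adj u v

theorem IsForestPartition.arboricity_le [Fintype V] {G : SimpleGraph V} {n : ℕ}
    {F : Fin n → SimpleGraph V} (hF : G.IsForestPartition F) : arboricity G ≤ n :=
  Nat.sInf_le ⟨F, hF⟩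

theorem IsForestPartition.exists_arboricity [Fintype V] {G : SimpleGraph V} {n : ℕ}
    {F : Fin n → SimpleGraph V} (hF : G.IsForestPartition F) :
    ∃ F' : Fin (arboricity G) → SimpleGraph V, G.IsForestPartition F' :=
  Nat.sInf_mem (s := {m | ∃ F : Fin m → SimpleGraph V, G.IsForestPartition F}) ⟨n, F, hF⟩

section BackNeighbors

variable [Fintype V] (G : SimpleGraph V) [DecidableRel G.Adj] (r : V → α)

def backNeighborFinset (v : V) : Finset V := {w | G.Adj v w ∧ r w < r v}

def backColorGraph (c : V → V → ℕ) (i : ℕ) : SimpleGraph V :=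
  fromRel fun u w => w ∈ G.backNeighborFinset r u ∧ c u w = i

variable {G r} {c : V → V → ℕ}

theorem mem_backNeighborFinset {v w : V} :
    w ∈ G.backNeighborFinset r v ↔ G.Adj v w ∧ r w < r v := by
  simp [backNeighborFinset]

theorem backColorGraph_le (i : ℕ) : G.backColorGraph r c i ≤ G := by
  rintro u w ⟨-, h | h⟩
  · exact (mem_backNeighborFinset.mp h.1).1
  · exact (mem_backNeighborFinset.mp h.1).1.symm

theorem backColorGraph_adj_of_lt {i : ℕ} {u w : V} (h : r w < r u) :
    (G.backColorGraph r c i).Adj u w ↔ w ∈ G.backNeighborFinset r u ∧ c u w = i := by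
  simp only [backColorGraph, fromRel_adj, mem_backNeighborFinset]
  constructor
  · rintro ⟨-, h' | h'⟩
    · exact h'
    · exact absurd h'.1.2 h.not_gt
  · intro h'
    exact ⟨h'.1.1.ne, Or.inl h'⟩

theorem isAcyclic_backColorGraph (hr : Injective r)
    (hc : ∀ u, Set.InjOn (c u) (G.backNeighborFinset r u)) (i : ℕ) :
    (G.backColorGraph r c i).IsAcyclic :=
  isAcyclic_of_forall_adj_lt_eq r hr fun v w w' hw hw' hwv hw'v => by
    rw [backColorGraph_adj_of_lt hwv] at hw
    rw [backColorGraph_adj_of_lt hw'v] at hw'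
    exact hc v hw.1 hw'.1 (hw.2.trans hw'.2.symm)

theorem existsUnique_backColorGraph_adj_of_lt {k : ℕ}
    (hc : ∀ u, ∀ w ∈ G.backNeighborFinset r u, c u w < k) {u w : V} (huw : G.Adj u w)
    (h : r w < r u) : ∃! i : Fin k, (G.backColorGraph r c i).Adj u w := by
  have hw : w ∈ G.backNeighborFinset r u := mem_backNeighborFinset.mpr ⟨huw, h⟩
  refine ⟨⟨c u w, hc u w hw⟩, (backColorGraph_adj_of_lt h).mpr ⟨hw, rfl⟩, fun j hj => ?_⟩
  exact Fin.ext ((backColorGraph_adj_of_lt h).mp hj).2.symm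

theorem exists_isForestPartition_of_card_backNeighborFinset_le (hr : Injective r) {k : ℕ}
    (hk : ∀ v, #(G.backNeighborFinset r v) ≤ k) :
    ∃ F : Fin k → SimpleGraph V, G.IsForestPartition F := by
  choose c hc_inj hc_lt using fun u => (G.backNeighborFinset r u).exists_injOn_lt_card
  have hc : ∀ u, ∀ w ∈ G.backNeighborFinset r u, c u w < k :=
    fun u w hw => (hc_lt u w hw).trans_le (hk u)
  refine ⟨fun i => G.backColorGraph r c i, fun i => isAcyclic_backColorGraph hr hc_inj i,
    fun i => backColorGraph_le i, fun u w huw => ?_⟩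
  rcases (hr.ne huw.ne).lt_or_gt with h | h
  · simpa only [adj_comm] using existsUnique_backColorGraph_adj_of_lt hc huw.symm h
  · exact existsUnique_backColorGraph_adj_of_lt hc huw h

end BackNeighbors

theorem card_filter_adj_le_sum_of_forall_exists_adj {G : SimpleGraph V} [DecidableRel G.Adj]
    {ι : Type*} [Fintype ι] {F : ι → SimpleGraph V} [∀ i, DecidableRel (F i).Adj]
    (hcover : ∀ u v, G.Adj u v → ∃ i, (F i).Adj u v) (s : Finset V) (v : V) :
    #{w ∈ s | G.Adj v w} ≤ ∑ i, #{w ∈ s | (F i).Adj v w} := by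
  classical
  calc #{w ∈ s | G.Adj v w} ≤ #(univ.biUnion fun i => {w ∈ s | (F i).Adj v w}) := by
        refine card_le_card fun w hw => ?_
        rw [mem_filter] at hw
        obtain ⟨i, hi⟩ := hcover v w hw.2
        exact mem_biUnion.mpr ⟨i, mem_univ i, mem_filter.mpr ⟨hw.1, hi⟩⟩
    _ ≤ ∑ i, #{w ∈ s | (F i).Adj v w} := card_biUnion_le

section Degeneracy

variable [Fintype V] (G : SimpleGraph V) [DecidableRel G.Adj]

theorem exists_card_filter_adj_le_degeneracy {s : Finset V} (hs : s.Nonempty) :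
    ∃ v ∈ s, #{w ∈ s | G.Adj v w} ≤ degeneracy G := by
  by_contra! hlarge
  have hbdd : BddAbove {d : ℕ | ∃ s : Finset V, s.Nonempty ∧
      ∀ v ∈ s, d ≤ #{w ∈ s | G.Adj v w}} :=
    ⟨Fintype.card V, fun d ⟨t, ⟨v, hv⟩, hd⟩ => (hd v hv).trans (card_le_univ _)⟩
  exact (le_csSup hbdd ⟨s, hs, hlarge⟩).not_gt (Nat.lt_succ_self _)

theorem exists_injective_card_backNeighborFinset_le {k : ℕ}
    (hk : ∀ s : Finset V, s.Nonempty → ∃ v ∈ s, #{w ∈ s | G.Adj v w} ≤ k) :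
    ∃ r : V → ℕ, Injective r ∧ ∀ v, #(G.backNeighborFinset r v) ≤ k := by
  classical
  suffices ∀ s : Finset V, ∃ r : V → ℕ, Set.InjOn r s ∧
      ∀ v ∈ s, #{w ∈ s | G.Adj v w ∧ r w < r v} ≤ k by
    obtain ⟨r, hr, hrk⟩ := this univ
    exact ⟨r, by simpa using hr, fun v => hrk v (mem_univ v)⟩
  intro s
  induction s using Finset.strongInduction with | H s ih =>
  rcases s.eq_empty_or_nonempty with rfl | hs
  · exact ⟨fun _ => 0, by simp, by simp⟩
  obtain ⟨v, hv, hvk⟩ := hk s hs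
  obtain ⟨r, hr, hrk⟩ := ih _ (erase_ssubset hv)
  set r' := update r v ((s.erase v).sup r + 1)
  have hr'_eq : ∀ x ∈ s.erase v, r' x = r x := fun x hx => update_of_ne (ne_of_mem_erase hx) _ _
  have hr'_v : r' v = (s.erase v).sup r + 1 := update_self ..
  have hr'_lt : ∀ x ∈ s.erase v, r' x < r' v := fun x hx => by
    rw [hr'_eq x hx, hr'_v]
    exact Nat.lt_succ_of_le (le_sup hx)
  refine ⟨r', ?_, fun x hx => ?_⟩
  · rw [← insert_erase hv, coe_insert, Set.injOn_insert (notMem_erase v s)]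
    exact ⟨hr.congr fun x hx => (hr'_eq x hx).symm, fun ⟨x, hx, hxv⟩ => (hr'_lt x hx).ne hxv⟩
  by_cases hxv : x = v
  · subst hxv
    exact (card_le_card (monotone_filter_right s fun _ _ hw => hw.1)).trans hvk
  · have hx' : x ∈ s.erase v := mem_erase.mpr ⟨hxv, hx⟩
    refine (card_le_card fun w hw => ?_).trans (hrk x hx')
    rw [mem_filter] at hw ⊢
    have hw' : w ∈ s.erase v := by
      refine mem_erase.mpr ⟨?_, hw.1⟩
      rintro rfl
      exact (hr'_lt x hx').not_gt hw.2.2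
    rw [hr'_eq w hw', hr'_eq x hx'] at hw
    exact ⟨hw', hw.2⟩

theorem degeneracy_le_two_mul_card_sub_one {ι : Type*} [Fintype ι] (F : ι → SimpleGraph V)
    (hF : ∀ i, (F i).IsAcyclic) (hcover : ∀ u v, G.Adj u v → ∃ i, (F i).Adj u v) :
    degeneracy G ≤ 2 * Fintype.card ι - 1 := by
  classical
  refine csSup_le' ?_
  rintro d ⟨s, hs, hd⟩
  have hsum : d * #s ≤ Fintype.card ι * (2 * (#s - 1)) := calc
    d * #s = ∑ v ∈ s, d := by simp [mul_comm]
    _ ≤ ∑ v ∈ s, #{w ∈ s | G.Adj v w} := sum_le_sum hd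
    _ ≤ ∑ v ∈ s, ∑ i, #{w ∈ s | (F i).Adj v w} :=
        sum_le_sum fun v _ => card_filter_adj_le_sum_of_forall_exists_adj hcover s v
    _ = ∑ i, ∑ v ∈ s, #{w ∈ s | (F i).Adj v w} := sum_comm
    _ ≤ ∑ _i : ι, 2 * (#s - 1) := sum_le_sum fun i _ => (hF i).sum_card_filter_adj_le s
    _ = Fintype.card ι * (2 * (#s - 1)) := by simp
  have hpos := hs.card_pos
  obtain ⟨n, hn⟩ : ∃ n, #s = n + 1 := ⟨#s - 1, by omega⟩
  rw [hn, Nat.add_sub_cancel] at hsum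
  by_contra! hd_large
  obtain ⟨hd_pos, hd_ge⟩ : 0 < d ∧ 2 * Fintype.card ι ≤ d := by omega
  nlinarith [Nat.mul_le_mul_right (n + 1) hd_ge]

end Degeneracy

end SimpleGraph

theorem stmt_9_general {V : Type*} [Fintype V] (G : SimpleGraph V) [DecidableRel G.Adj] :
    arboricity G ≤ degeneracy G ∧ degeneracy G ≤ 2 * arboricity G - 1 := by
  obtain ⟨r, hr, hback⟩ :=
    G.exists_injective_card_backNeighborFinset_le fun _ => G.exists_card_filter_adj_le_degeneracy
  obtain ⟨F, hF⟩ := G.exists_isForestPartition_of_card_backNeighborFinset_le hr hback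
  refine ⟨hF.arboricity_le, ?_⟩
  obtain ⟨F', hF', -, hpart⟩ := hF.exists_arboricity
  simpa using G.degeneracy_le_two_mul_card_sub_one F' hF' fun u v huv => (hpart u v huv).exists

/-- For a finite simple graph with at least one edge, arboricity `α` and
degeneracy `β` satisfy `α ≤ β ≤ 2α - 1`. -/
theorem stmt_9 {V : Type*} [Fintype V] (G : SimpleGraph V) [DecidableRel G.Adj]
    (h : ∃ u v, G.Adj u v) :
    arboricity G ≤ degeneracy G ∧ degeneracy G ≤ 2 * arboricity G - 1 :=
  stmt_9_general G
end

section
/- Define T(l, C) for integers l ≥ 2 and finite sets C by T(2,C) = 2·Σ_{u∈C}(|C| + d⁺(u)) and T(l,C) = Σ_{u∈C}(|C| + d⁺(u)) + Σ_{u∈C} T(l−1, N⁺(u) ∩ C), where d⁺(u) = |N⁺(u)| ≤ Δ, |C| ≤ Δ, and Σ_{u∈C}|N⁺(u)∩C| ≤ |C|(Δ−1)/2 for every C arising in the recursion. Then for all 2 ≤ l ≤ k−1 and Δ ≥ 2, k ≥ 3: T(l, C) ≤ 2Δ(k + l/2)(Δ/2)^{l−2}·|C|. -/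
/-!
Write `B l = 2Δ(k + l/2)(Δ/2)^(l-2)`. Bounding every summand `|C| + d⁺(u)` by `2Δ` gives the base
case. For the step, induction bounds `∑_{u ∈ C} T(l, N⁺(u) ∩ C)` by `B l · ∑_{u ∈ C} |N⁺(u) ∩ C|`,
which is at most `B l · |C|(Δ-1)/2`; it remains that `2Δ + B l (Δ-1)/2 ≤ B (l+1)`, and indeed
`B (l+1) = B l · Δ/2 + Δ(Δ/2)^(l-1)` where both `B l / 2` and `Δ(Δ/2)^(l-1)` are at least `Δ`.
-/

open Finset

noncomputable def costBound (Δ k : ℝ) (l : ℕ) : ℝ :=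
  2 * Δ * (k + l / 2) * (Δ / 2) ^ (l - 2)

lemma costBound_two (Δ k : ℝ) : costBound Δ k 2 = 2 * Δ * (k + 1) := by
  norm_num [costBound]

lemma costBound_succ (Δ k : ℝ) {l : ℕ} (hl : 2 ≤ l) :
    costBound Δ k (l + 1) = costBound Δ k l * (Δ / 2) + Δ * (Δ / 2) ^ (l - 1) := by
  obtain ⟨m, rfl⟩ := Nat.exists_eq_add_of_le hl
  simp only [costBound, show 2 + m + 1 - 2 = m + 1 by omega, show 2 + m - 2 = m by omega,
    show 2 + m - 1 = m + 1 by omega, pow_succ]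
  push_cast
  ring

lemma costBound_nonneg {Δ k : ℝ} (hΔ : 0 ≤ Δ) (hk : 0 ≤ k) (l : ℕ) : 0 ≤ costBound Δ k l := by
  unfold costBound
  positivity

lemma two_mul_add_costBound_mul_le_costBound_succ {Δ k : ℝ} (hΔ : 2 ≤ Δ) (hk : 0 ≤ k)
    {l : ℕ} (hl : 2 ≤ l) :
    2 * Δ + costBound Δ k l * ((Δ - 1) / 2) ≤ costBound Δ k (l + 1) := by
  have hpow : ∀ n : ℕ, 1 ≤ (Δ / 2) ^ n := fun n => one_le_pow₀ (by linarith)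
  have hl' : (2 : ℝ) ≤ l := by exact_mod_cast hl
  have half_bound : Δ ≤ costBound Δ k l / 2 := by
    have : 1 ≤ (k + l / 2) * (Δ / 2) ^ (l - 2) := by
      nlinarith [hpow (l - 2)]
    unfold costBound
    nlinarith
  have last_term : Δ ≤ Δ * (Δ / 2) ^ (l - 1) := le_mul_of_one_le_right (by linarith) (hpow _)
  rw [costBound_succ Δ k hl]
  linarith

lemma sum_card_add_card_le {V : Type*} (N : V → Finset V) (C : Finset V) {Δ : ℕ}
    (hC : #C ≤ Δ) (hdeg : ∀ u ∈ C, #(N u) ≤ Δ) :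
    ∑ u ∈ C, ((#C : ℝ) + #(N u)) ≤ 2 * Δ * #C := by
  calc ∑ u ∈ C, ((#C : ℝ) + #(N u))
      ≤ ∑ _u ∈ C, ((Δ : ℝ) + Δ) := by
        gcongr with u hu
        exact_mod_cast hdeg u hu
    _ = 2 * Δ * #C := by
        rw [sum_const, nsmul_eq_mul]
        ring

theorem stmt_15_general {V : Type*} [DecidableEq V] (N : V → Finset V) (Δ k : ℕ)
    (hΔ : 2 ≤ Δ)
    (hdeg : ∀ u, (N u).card ≤ Δ)
    (T : ℕ → Finset V → ℝ)
    (hT2 : ∀ C : Finset V, T 2 C = 2 * ∑ u ∈ C, ((C.card : ℝ) + (N u).card))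
    (hTl : ∀ l, 3 ≤ l → ∀ C : Finset V,
      T l C = (∑ u ∈ C, ((C.card : ℝ) + (N u).card))
        + ∑ u ∈ C, T (l - 1) (N u ∩ C))
    (hsum : ∀ C : Finset V, C.card ≤ Δ →
      (∑ u ∈ C, ((N u ∩ C).card : ℝ)) ≤ (C.card : ℝ) * ((Δ : ℝ) - 1) / 2) :
    ∀ l, 2 ≤ l → l ≤ k - 1 → ∀ C : Finset V, C.card ≤ Δ →
      T l C ≤ 2 * (Δ : ℝ) * ((k : ℝ) + (l : ℝ) / 2) * ((Δ : ℝ) / 2) ^ (l - 2)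
        * (C.card : ℝ) := by
  have hΔR : (2 : ℝ) ≤ Δ := by exact_mod_cast hΔ
  change ∀ l, 2 ≤ l → l ≤ k - 1 → ∀ C : Finset V, #C ≤ Δ → T l C ≤ costBound Δ k l * #C
  intro l hl
  induction l, hl using Nat.le_induction with
  | base =>
    intro hk C hC
    have hkR : (1 : ℝ) ≤ k := by exact_mod_cast (by omega : 1 ≤ k)
    rw [hT2, costBound_two]
    calc 2 * ∑ u ∈ C, ((#C : ℝ) + #(N u))
        ≤ 2 * (2 * Δ * #C) := by
          gcongr
          exact sum_card_add_card_le N C hC fun u _ => hdeg u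
      _ = 2 * Δ * 2 * #C := by ring
      _ ≤ 2 * Δ * (k + 1) * #C := by
          gcongr
          linarith
  | succ l hl ih =>
    intro hk C hC
    have hB := costBound_nonneg (by linarith) (k.cast_nonneg (α := ℝ)) l
    rw [hTl (l + 1) (by omega), Nat.add_sub_cancel]
    calc ∑ u ∈ C, ((#C : ℝ) + #(N u)) + ∑ u ∈ C, T l (N u ∩ C)
        ≤ 2 * Δ * #C + ∑ u ∈ C, costBound Δ k l * #(N u ∩ C) := by
          gcongr with u
          · exact sum_card_add_card_le N C hC fun u _ => hdeg u
          · exact ih (by omega) _ ((card_le_card inter_subset_left).trans (hdeg u))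
      _ ≤ 2 * Δ * #C + costBound Δ k l * (#C * ((Δ - 1) / 2)) := by
          rw [← mul_sum, ← mul_div_assoc]
          gcongr
          exact hsum C hC
      _ = (2 * Δ + costBound Δ k l * ((Δ - 1) / 2)) * #C := by ring
      _ ≤ costBound Δ k (l + 1) * #C := by
          gcongr
          exact two_mul_add_costBound_mul_le_costBound_succ hΔR k.cast_nonneg hl

/-- The recurrence bound for the cost of `SDegreeList`: if
`T 2 C = 2 ∑_{u ∈ C} (|C| + d⁺(u))` and for `l ≥ 3`
`T l C = ∑_{u ∈ C} (|C| + d⁺(u)) + ∑_{u ∈ C} T (l-1) (N⁺(u) ∩ C)`, where all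
out-degrees are at most `Δ` and `∑_{u ∈ C} |N⁺(u) ∩ C| ≤ |C|(Δ-1)/2` whenever
`|C| ≤ Δ`, then for all `2 ≤ l ≤ k - 1` (with `Δ ≥ 2`, `k ≥ 3`) and all `C` with
`|C| ≤ Δ`:  `T l C ≤ 2Δ (k + l/2) (Δ/2)^(l-2) |C|`. -/
theorem stmt_15 {V : Type*} [DecidableEq V] (N : V → Finset V) (Δ k : ℕ)
    (hΔ : 2 ≤ Δ) (hk : 3 ≤ k)
    (hdeg : ∀ u, (N u).card ≤ Δ)
    (T : ℕ → Finset V → ℝ)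
    (hT2 : ∀ C : Finset V, T 2 C = 2 * ∑ u ∈ C, ((C.card : ℝ) + (N u).card))
    (hTl : ∀ l, 3 ≤ l → ∀ C : Finset V,
      T l C = (∑ u ∈ C, ((C.card : ℝ) + (N u).card))
        + ∑ u ∈ C, T (l - 1) (N u ∩ C))
    (hsum : ∀ C : Finset V, C.card ≤ Δ →
      (∑ u ∈ C, ((N u ∩ C).card : ℝ)) ≤ (C.card : ℝ) * ((Δ : ℝ) - 1) / 2) :
    ∀ l, 2 ≤ l → l ≤ k - 1 → ∀ C : Finset V, C.card ≤ Δ →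
      T l C ≤ 2 * (Δ : ℝ) * ((k : ℝ) + (l : ℝ) / 2) * ((Δ : ℝ) / 2) ^ (l - 2)
        * (C.card : ℝ) :=
  stmt_15_general N Δ k hΔ hdeg T hT2 hTl hsum
end

section
/- Let G be a finite simple graph with h-index γ, and orient each edge of G toward the endpoint of larger degree, with ties broken by vertex ID (the degree ordering orientation). Then every vertex's out-degree in this orientation is at most γ. -/
/-- The h-index of `G`: the largest `h` such that `G` has at least `h` vertices
of degree at least `h`. -/
noncomputable def hIndex {V : Type*} [Fintype V] (G : SimpleGraph V)
    [DecidableRel G.Adj] : ℕ :=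
  sSup {h : ℕ | h ≤ (Finset.univ.filter (fun v => h ≤ G.degree v)).card}

/-- In the degree-ordering orientation, which directs each edge toward the
endpoint of larger degree (ties broken by an injective vertex ID), every vertex
has out-degree at most the h-index `γ` of the graph. -/
theorem stmt_18 {V : Type*} [Fintype V] (G : SimpleGraph V) [DecidableRel G.Adj]
    (id : V → ℕ) (hid : Function.Injective id) :
    ∀ u : V,
      (Finset.univ.filter (fun v => G.Adj u v ∧
        (G.degree u < G.degree v ∨
          (G.degree u = G.degree v ∧ id u < id v)))).card ≤ hIndex G := by
  intro u
  set S := Finset.univ.filter (fun v => G.Adj u v ∧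
    (G.degree u < G.degree v ∨ (G.degree u = G.degree v ∧ id u < id v))) with hS
  set d := S.card with hd
  -- out-degree is at most degree of u
  have hdu : d ≤ G.degree u := by
    rw [← SimpleGraph.card_neighborFinset_eq_degree]
    apply Finset.card_le_card
    intro v hv
    rw [hS, Finset.mem_filter] at hv
    rw [SimpleGraph.mem_neighborFinset]
    exact hv.2.1
  -- every out-neighbor has degree ≥ d
  have hsub : S ⊆ Finset.univ.filter (fun v => d ≤ G.degree v) := by
    intro v hv
    rw [hS, Finset.mem_filter] at hv
    rw [Finset.mem_filter]
    refine ⟨Finset.mem_univ _, ?_⟩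
    rcases hv.2.2 with h | h
    · exact hdu.trans h.le
    · exact hdu.trans h.1.le
  have hmem : d ∈ {h : ℕ | h ≤ (Finset.univ.filter (fun v => h ≤ G.degree v)).card} :=
    Finset.card_le_card hsub
  have hbdd : BddAbove {h : ℕ | h ≤ (Finset.univ.filter (fun v => h ≤ G.degree v)).card} := by
    refine ⟨Fintype.card V, fun x hx => ?_⟩
    exact hx.trans ((Finset.card_le_card (Finset.filter_subset _ _)).trans (le_of_eq (Finset.card_univ)))
  exact le_csSup hbdd hmem
end
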